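/- Let h be a Riemannian metric on a manifold N and W a vector field with pointwise h-norm |W|_h < 1. Then the formula F(y) = (1/λ)·(√(λ·h(y,y) + h(W,y)²) − h(W,y)), where λ = 1 − h(W,W), defines a Finsler norm on each tangent space, and F satisfies the navigation relation h(y/F(y) − W, y/F(y) − W) = 1 for all y ≠ 0. -/

import Mathlib

open scoped RealInnerProductSpace

variable {V : Type*} [NormedAddCommGroup V] [InnerProductSpace ℝ V] [FiniteDimensional ℝ V]

/-- The fundamental form of a Minkowski norm. -/
noncomputable def fundForm (F : V → ℝ) (y u v : V) : ℝ :=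
  (1/2) * deriv (fun s : ℝ => deriv (fun t : ℝ => (F (y + s • u + t • v))^2) 0) 0

/-- A Minkowski norm on a finite-dimensional real vector space. -/
def IsMinkowskiNorm (F : V → ℝ) : Prop :=
  (∀ y, 0 ≤ F y) ∧ (∀ y : V, y ≠ 0 → 0 < F y) ∧
  ContDiffOn ℝ (⊤ : ℕ∞) F {(0 : V)}ᶜ ∧
  (∀ c : ℝ, 0 ≤ c → ∀ y, F (c • y) = c * F y) ∧
  (∀ y : V, y ≠ 0 → ∀ u : V, u ≠ 0 → 0 < fundForm F y u u)

/-- The Randers norm produced by the navigation datum `(h, W)`: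
`F(y) = (1/λ)(√(λ h(y,y) + h(W,y)²) − h(W,y))`, `λ = 1 − h(W,W)`. -/
noncomputable def navF (W : V) (y : V) : ℝ :=
  (1 - ⟪W, W⟫)⁻¹ * (Real.sqrt ((1 - ⟪W, W⟫) * ⟪y, y⟫ + ⟪W, y⟫ ^ 2) - ⟪W, y⟫)

noncomputable def qfun (A B C b0 b1 L : ℝ) : ℝ → ℝ :=
  fun r => (L⁻¹ * (Real.sqrt (L*(A + 2*B*r + C*r^2) + (b0 + b1*r)^2) - (b0 + b1*r)))^2

noncomputable def q1fun (A B C b0 b1 L : ℝ) : ℝ → ℝ :=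
  fun r => 2 * (L⁻¹ * (Real.sqrt (L*(A + 2*B*r + C*r^2) + (b0 + b1*r)^2) - (b0 + b1*r))) *
    (L⁻¹ * ((L*(2*B + 2*C*r) + 2*(b0 + b1*r)*b1) /
      (2 * Real.sqrt (L*(A + 2*B*r + C*r^2) + (b0 + b1*r)^2)) - b1))

lemma Qp_hasDerivAt (A B C b0 b1 L r : ℝ) :
    HasDerivAt (fun r : ℝ => L*(A + 2*B*r + C*r^2) + (b0 + b1*r)^2)
      (L*(2*B + 2*C*r) + 2*(b0 + b1*r)*b1) r := by
  have hx : HasDerivAt (fun r : ℝ => r) 1 r := hasDerivAt_id r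
  have hb : HasDerivAt (fun r : ℝ => b0 + b1*r) b1 r := by
    simpa using (hx.const_mul b1).const_add b0
  have h1 : HasDerivAt (fun r : ℝ => A + 2*B*r + C*r^2) (2*B + 2*C*r) r := by
    have hx2 : HasDerivAt (fun r : ℝ => C*r^2) (2*C*r) r := by
      simpa [mul_comm, mul_assoc, mul_left_comm] using (hasDerivAt_pow 2 r).const_mul C
    have := ((hx.const_mul (2*B)).const_add A).add hx2
    exact this.congr_deriv (by ring)
  have hb2 : HasDerivAt (fun r : ℝ => (b0 + b1*r)^2) (2*(b0 + b1*r)*b1) r := by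
    have := hb.pow 2
    exact this.congr_deriv (by ring)
  exact (h1.const_mul L).add hb2

lemma sqrtQp_hasDerivAt (A B C b0 b1 L : ℝ) {r : ℝ}
    (hQ : 0 < L*(A + 2*B*r + C*r^2) + (b0 + b1*r)^2) :
    HasDerivAt (fun r : ℝ => Real.sqrt (L*(A + 2*B*r + C*r^2) + (b0 + b1*r)^2))
      ((L*(2*B + 2*C*r) + 2*(b0 + b1*r)*b1) /
        (2 * Real.sqrt (L*(A + 2*B*r + C*r^2) + (b0 + b1*r)^2))) r := by
  have := (Real.hasDerivAt_sqrt hQ.ne').comp r (Qp_hasDerivAt A B C b0 b1 L r)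
  exact this.congr_deriv (by ring)

lemma qfun_hasDerivAt (A B C b0 b1 L : ℝ) {r : ℝ}
    (hQ : 0 < L*(A + 2*B*r + C*r^2) + (b0 + b1*r)^2) :
    HasDerivAt (qfun A B C b0 b1 L) (q1fun A B C b0 b1 L r) r := by
  have hx : HasDerivAt (fun r : ℝ => r) 1 r := hasDerivAt_id r
  have hb : HasDerivAt (fun r : ℝ => b0 + b1*r) b1 r := by
    simpa using (hx.const_mul b1).const_add b0
  have hin := ((sqrtQp_hasDerivAt A B C b0 b1 L hQ).sub hb).const_mul L⁻¹
  have := hin.pow 2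
  exact this.congr_deriv (by unfold q1fun; simp only [Pi.sub_apply]; ring)

lemma Epos (A B C b0 b1 L S : ℝ) (hL : 0 < L) (hA : 0 < A) (hC : 0 < C)
    (hCS : B^2 ≤ A*C) (hS : 0 < S) (hS2 : S^2 = L*A + b0^2) (hm : b0 < S) :
    0 < S*((L*B+b0*b1) - b1*S)^2 + (S-b0)*((L*C+b1^2)*S^2-(L*B+b0*b1)^2) := by
  have hACB : 0 ≤ A*C - B^2 := by linarith
  have hkey : A*((L*C+b1^2)*S^2-(L*B+b0*b1)^2)
      = L*(L*A*(A*C-B^2) + (A*b1-B*b0)^2 + b0^2*(A*C-B^2)) := by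
    linear_combination (A*(L*C+b1^2)) * hS2
  have h1 : 0 ≤ (L*C+b1^2)*S^2-(L*B+b0*b1)^2 := by
    nlinarith [hkey, sq_nonneg (A*b1-B*b0), mul_nonneg (mul_nonneg hL.le hA.le) hACB,
      mul_nonneg (sq_nonneg b0) hACB, mul_pos hL hA]
  rcases lt_or_eq_of_le hCS with hlt | heq
  · have h2 : 0 < (L*C+b1^2)*S^2-(L*B+b0*b1)^2 := by
      nlinarith [hkey, sq_nonneg (A*b1-B*b0), mul_pos (mul_pos hL hA) (show 0 < A*C-B^2 by linarith),
        mul_nonneg (sq_nonneg b0) hACB]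
    nlinarith [mul_nonneg hS.le (sq_nonneg ((L*B+b0*b1) - b1*S)),
      mul_pos (show 0 < S - b0 by linarith) h2]
  · by_cases hk : A*b1 - B*b0 = 0
    · have hB : B ≠ 0 := by
        intro h
        rw [h] at heq
        nlinarith [mul_pos hA hC]
      have hPs : A*((L*B+b0*b1) - b1*S) = B*S*(S-b0) := by
        linear_combination (b0 - S)*hk - B*hS2
      have hne : (L*B+b0*b1) - b1*S ≠ 0 := by
        intro h
        rw [h, mul_zero] at hPs
        have : B*S*(S-b0) ≠ 0 :=
          mul_ne_zero (mul_ne_zero hB hS.ne') (by intro h2; nlinarith)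
        exact this hPs.symm
      have h3 : 0 < S*((L*B+b0*b1) - b1*S)^2 :=
        mul_pos hS (lt_of_le_of_ne (sq_nonneg _) (Ne.symm (pow_ne_zero 2 hne)))
      nlinarith [mul_nonneg (show (0:ℝ) ≤ S - b0 by linarith) h1]
    · have hk2 : 0 < (A*b1-B*b0)^2 :=
        lt_of_le_of_ne (sq_nonneg _) (Ne.symm (pow_ne_zero 2 hk))
      have h2 : 0 < (L*C+b1^2)*S^2-(L*B+b0*b1)^2 := by
        nlinarith [hkey, mul_pos hL hk2, mul_nonneg (mul_nonneg hL.le hA.le) hACB,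
          mul_nonneg (sq_nonneg b0) hACB, mul_pos hL hA]
      nlinarith [mul_nonneg hS.le (sq_nonneg ((L*B+b0*b1) - b1*S)),
        mul_pos (show 0 < S - b0 by linarith) h2]

lemma aux_second (A B C b0 b1 L : ℝ) (hL : 0 < L) (hA : 0 < A) (hC : 0 < C)
    (hCS : B^2 ≤ A*C) :
    0 < deriv (fun s : ℝ => deriv (fun t : ℝ => qfun A B C b0 b1 L (s+t)) 0) 0 := by
  have hQ0 : 0 < L*A + b0^2 := by nlinarith [mul_pos hL hA, sq_nonneg b0]
  set S := Real.sqrt (L*A + b0^2) with hSdef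
  have hSpos : 0 < S := Real.sqrt_pos.mpr hQ0
  have hS2 : S^2 = L*A + b0^2 := Real.sq_sqrt hQ0.le
  have hm : b0 < S := by nlinarith [mul_pos hL hA]
  -- continuity of Qp and eventual positivity
  have hcont : ContinuousAt (fun s : ℝ => L*(A + 2*B*s + C*s^2) + (b0 + b1*s)^2) 0 := by
    fun_prop
  have h00 : (0:ℝ) < L*(A + 2*B*(0:ℝ) + C*(0:ℝ)^2) + (b0 + b1*(0:ℝ))^2 := by
    norm_num; nlinarith [mul_pos hL hA, sq_nonneg b0]
  have hev : ∀ᶠ s in nhds (0:ℝ), 0 < L*(A + 2*B*s + C*s^2) + (b0 + b1*s)^2 :=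
    hcont.eventually (eventually_gt_nhds h00)
  -- the inner deriv equals q1fun eventually
  have hev2 : (fun s : ℝ => deriv (fun t : ℝ => qfun A B C b0 b1 L (s+t)) 0)
      =ᶠ[nhds 0] q1fun A B C b0 b1 L := by
    filter_upwards [hev] with s hs
    have hQ : 0 < L*(A + 2*B*(s+0) + C*(s+0)^2) + (b0 + b1*(s+0))^2 := by simpa using hs
    have hcomp := (qfun_hasDerivAt A B C b0 b1 L hQ).comp 0
      ((hasDerivAt_id (0:ℝ)).const_add s)
    have : HasDerivAt (fun t : ℝ => qfun A B C b0 b1 L (s+t)) (q1fun A B C b0 b1 L s) 0 := by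
      simp [Function.comp_def] at hcomp
      exact hcomp
    exact this.deriv
  rw [hev2.deriv_eq]
  -- now compute deriv of q1fun at 0
  have hx : HasDerivAt (fun r : ℝ => r) 1 (0:ℝ) := hasDerivAt_id 0
  have hb : HasDerivAt (fun r : ℝ => b0 + b1*r) b1 (0:ℝ) := by
    simpa using (hx.const_mul b1).const_add b0
  have hs0 := sqrtQp_hasDerivAt A B C b0 b1 L h00
  have hf1 := ((sqrtQp_hasDerivAt A B C b0 b1 L h00).sub hb).const_mul L⁻¹
  have hQd : HasDerivAt (fun r : ℝ => L*(2*B + 2*C*r) + 2*(b0 + b1*r)*b1)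
      (L*(2*C) + 2*b1*b1) (0:ℝ) := by
    have h1 : HasDerivAt (fun r : ℝ => L*(2*B + 2*C*r)) (L*(2*C)) (0:ℝ) := by
      have := ((hx.const_mul (2*C)).const_add (2*B)).const_mul L
      exact this.congr_deriv (by ring)
    have h2 : HasDerivAt (fun r : ℝ => 2*(b0 + b1*r)*b1) (2*b1*b1) (0:ℝ) := by
      have := (hb.const_mul 2).mul_const b1
      convert this using 1 <;> ring
    exact h1.add h2
  have hdenne : (2 : ℝ) * Real.sqrt (L*(A + 2*B*(0:ℝ) + C*(0:ℝ)^2) + (b0 + b1*(0:ℝ))^2) ≠ 0 := by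
    positivity
  have hdiv := hQd.div (hs0.const_mul 2) (by
    simpa using (show ((fun r : ℝ => 2*Real.sqrt (L*(A + 2*B*r + C*r^2) + (b0 + b1*r)^2)) 0 ≠ 0) from by
      simpa using hdenne))
  have hf2 := (hdiv.sub_const b1).const_mul L⁻¹
  have hq1 := (hf1.const_mul 2).mul hf2
  have hq1' : HasDerivAt (q1fun A B C b0 b1 L)
      (2*(S*((L*B+b0*b1) - b1*S)^2 + (S-b0)*((L*C+b1^2)*S^2-(L*B+b0*b1)^2))/(L^2*S^3)) 0 := by
    refine hq1.congr_deriv ?_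
    norm_num
    rw [← hSdef]
    field_simp [hL.ne', hSpos.ne']
  rw [hq1'.deriv]
  have hE := Epos A B C b0 b1 L S hL hA hC hCS hSpos hS2 hm
  positivity

open scoped RealInnerProductSpace in
lemma innerselfpos {V : Type*} [NormedAddCommGroup V] [InnerProductSpace ℝ V]
    {x : V} (hx : x ≠ 0) : 0 < ⟪x, x⟫ :=
  lt_of_le_of_ne real_inner_self_nonneg (fun h => hx (inner_self_eq_zero.mp h.symm))

/-- The navigation formula defines a Minkowski (Finsler) norm on each tangent space and
satisfies the navigation relation `h(y/F(y) − W, y/F(y) − W) = 1` for `y ≠ 0`. -/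
theorem navF_isMinkowskiNorm_and_navigation (W : V) (hW : ‖W‖ < 1) :
    IsMinkowskiNorm (navF W) ∧
      ∀ y : V, y ≠ 0 →
        ⟪(navF W y)⁻¹ • y - W, (navF W y)⁻¹ • y - W⟫ = 1 := by
  have hL : 0 < 1 - ⟪W, W⟫ := by
    have h1 : ⟪W, W⟫ = ‖W‖^2 := real_inner_self_eq_norm_sq W
    nlinarith [norm_nonneg W]
  -- positivity on nonzero vectors
  have hpos : ∀ y : V, y ≠ 0 → 0 < navF W y := by
    intro y hy
    have hA : 0 < ⟪y, y⟫ := innerselfpos hy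
    have h2 : ⟪W, y⟫ ≤ |⟪W, y⟫| := le_abs_self _
    have h3 : |⟪W, y⟫| = Real.sqrt (⟪W, y⟫^2) := (Real.sqrt_sq_eq_abs _).symm
    have h4 : Real.sqrt (⟪W, y⟫^2) < Real.sqrt ((1 - ⟪W, W⟫) * ⟪y, y⟫ + ⟪W, y⟫ ^ 2) :=
      Real.sqrt_lt_sqrt (sq_nonneg _) (by nlinarith [mul_pos hL hA])
    exact mul_pos (inv_pos.mpr hL) (by linarith)
  have hnonneg : ∀ y : V, 0 ≤ navF W y := by
    intro y
    by_cases hy : y = 0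
    · simp [navF, hy]
    · exact (hpos y hy).le
  -- smoothness
  have hsmooth : ContDiffOn ℝ (⊤ : ℕ∞) (navF W) {(0 : V)}ᶜ := by
    intro y hy
    have hy0 : y ≠ 0 := hy
    apply ContDiffAt.contDiffWithinAt
    have hg : ContDiff ℝ (⊤ : ℕ∞) (fun z : V => (1 - ⟪W, W⟫) * ⟪z, z⟫ + ⟪W, z⟫ ^ 2) :=
      (contDiff_const.mul (contDiff_id.inner ℝ contDiff_id)).add
        ((contDiff_const.inner ℝ contDiff_id).pow 2)
    have hA : 0 < ⟪y, y⟫ := innerselfpos hy0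
    have hposy : 0 < (1 - ⟪W, W⟫) * ⟪y, y⟫ + ⟪W, y⟫ ^ 2 := by
      nlinarith [mul_pos hL hA, sq_nonneg (⟪W, y⟫ : ℝ)]
    have hsq : ContDiffAt ℝ (⊤ : ℕ∞) Real.sqrt ((fun z : V => (1 - ⟪W, W⟫) * ⟪z, z⟫ + ⟪W, z⟫ ^ 2) y) :=
      Real.contDiffAt_sqrt hposy.ne'
    exact contDiffAt_const.mul ((hsq.comp y hg.contDiffAt).sub
      (contDiff_const.inner ℝ contDiff_id).contDiffAt)
  -- homogeneity
  have hhom : ∀ c : ℝ, 0 ≤ c → ∀ y : V, navF W (c • y) = c * navF W y := by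
    intro c hc y
    unfold navF
    rw [real_inner_smul_left, real_inner_smul_right, real_inner_smul_right]
    rw [show (1 - ⟪W, W⟫) * (c * (c * ⟪y, y⟫)) + (c * ⟪W, y⟫) ^ 2
        = c^2 * ((1 - ⟪W, W⟫) * ⟪y, y⟫ + ⟪W, y⟫ ^ 2) by ring]
    rw [Real.sqrt_mul (sq_nonneg c), Real.sqrt_sq hc]
    ring
  -- strong convexity
  have hconv : ∀ y : V, y ≠ 0 → ∀ u : V, u ≠ 0 → 0 < fundForm (navF W) y u u := by
    intro y hy u hu
    set L : ℝ := 1 - ⟪W, W⟫ with hLdef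
    set A : ℝ := ⟪y, y⟫ with hAdef
    set B : ℝ := ⟪y, u⟫ with hBdef
    set C : ℝ := ⟪u, u⟫ with hCdef
    set b0 : ℝ := ⟪W, y⟫ with hb0def
    set b1 : ℝ := ⟪W, u⟫ with hb1def
    have hA : 0 < A := innerselfpos hy
    have hC : 0 < C := innerselfpos hu
    have hCS : B^2 ≤ A*C := by
      have := real_inner_mul_inner_self_le y u
      rw [hBdef, hAdef, hCdef]; nlinarith [this]
    have key : ∀ s t : ℝ, (navF W (y + s • u + t • u))^2 = qfun A B C b0 b1 L (s+t) := by
      intro s t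
      have hsum : y + s • u + t • u = y + (s+t) • u := by
        rw [add_smul, ← add_assoc]
      rw [hsum]
      have h1 : ⟪y + (s+t) • u, y + (s+t) • u⟫ = A + 2*B*(s+t) + C*(s+t)^2 := by
        rw [real_inner_add_add_self, real_inner_smul_right, real_inner_smul_left,
          real_inner_smul_right, ← hAdef, ← hBdef, ← hCdef]
        ring
      have h2 : ⟪W, y + (s+t) • u⟫ = b0 + b1*(s+t) := by
        rw [inner_add_right, real_inner_smul_right, ← hb0def, ← hb1def]
        ring
      unfold navF qfun
      rw [h1, h2, ← hLdef]
    have hff : fundForm (navF W) y u u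
        = (1/2) * deriv (fun s : ℝ => deriv (fun t : ℝ => qfun A B C b0 b1 L (s+t)) 0) 0 := by
      unfold fundForm
      have heq : (fun s : ℝ => deriv (fun t : ℝ => (navF W (y + s • u + t • u))^2) 0)
          = (fun s : ℝ => deriv (fun t : ℝ => qfun A B C b0 b1 L (s+t)) 0) := by
        funext s
        congr 1
        funext t
        exact key s t
      rw [heq]
    rw [hff]
    have := aux_second A B C b0 b1 L hL hA hC hCS
    linarith
  -- navigation relation
  have hnav : ∀ y : V, y ≠ 0 →
      ⟪(navF W y)⁻¹ • y - W, (navF W y)⁻¹ • y - W⟫ = 1 := by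
    intro y hy
    set L : ℝ := 1 - ⟪W, W⟫ with hLdef
    set A : ℝ := ⟪y, y⟫ with hAdef
    set b0 : ℝ := ⟪W, y⟫ with hb0def
    set F : ℝ := navF W y with hFdef
    have hA : 0 < A := innerselfpos hy
    have hQ0 : 0 < L*A + b0^2 := by nlinarith [mul_pos hL hA, sq_nonneg b0]
    set S : ℝ := Real.sqrt (L*A + b0^2) with hSdef
    have hS2 : S^2 = L*A + b0^2 := Real.sq_sqrt hQ0.le
    have hF : 0 < F := hpos y hy
    have hFL : L * F = S - b0 := by
      rw [hFdef]
      unfold navF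
      rw [← hLdef, ← hAdef, ← hb0def]
      have : L * A + b0^2 = L * A + b0 ^ 2 := rfl
      field_simp
      rfl
    have hquad : L*F^2 + 2*F*b0 = A := by
      have h2 : (L*F)^2 + 2*(L*F)*b0 = L*A := by
        rw [hFL]; linear_combination hS2
      have h3 : L*(L*F^2 + 2*F*b0) = L*A := by linear_combination h2
      exact mul_left_cancel₀ hL.ne' h3
    rw [real_inner_sub_sub_self, real_inner_smul_left, real_inner_smul_right,
      real_inner_smul_left, real_inner_comm W y]
    rw [← hAdef, ← hb0def]
    have hWW : ⟪W, W⟫ = 1 - L := by rw [hLdef]; ring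
    rw [hWW]
    field_simp
    linear_combination (-1 : ℝ)*hquad
  exact ⟨⟨hnonneg, hpos, hsmooth, hhom, hconv⟩, hnav⟩
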